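/- Let R be a commutative noetherian ring and X a finitely generated R-module with grade_R X ≥ 1 (i.e., Hom_R(X,R) = 0). Then for any c with 0 ≤ c < grade_R X, the natural map End_R(Ω^c X) → \underline{End}_R(Ω^c X) composed with the c-fold syzygy isomorphism yields a ring isomorphism \underline{End}_R(Ω^c X) ≅ End_R(X). -/

import Mathlib

open CategoryTheory
universe u
noncomputable section

/-- A linear map factors through a projective module. -/
def FactorsThroughProjective {R : Type u} [Ring R] {M N : Type u}
    [AddCommGroup M] [AddCommGroup N] [Module R M] [Module R N] (f : M →ₗ[R] N) : Prop :=
  ∃ (P : Type u) (_ : AddCommGroup P) (_ : Module R P), Module.Projective R P ∧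
    ∃ (g : M →ₗ[R] P) (h : P →ₗ[R] N), h.comp g = f

/-- `Ext^i_R(X, Y) = 0`. -/
def extZero (R : Type u) [CommRing R] (i : ℕ) (X Y : ModuleCat.{u} R) : Prop :=
  Subsingleton (((Ext R (ModuleCat.{u} R) i).obj (Opposite.op X)).obj Y)

/-- `Y` is an `n`-th syzygy of `N` (via finitely generated projective modules). -/
def IsSyzygy (R : Type u) [CommRing R] : ℕ → ModuleCat.{u} R → ModuleCat.{u} R → Prop
  | 0, Y, N => Nonempty (Y ≅ N)
  | n+1, Y, N => ∃ (P K : ModuleCat.{u} R) (i : Y ⟶ P) (p : P ⟶ K),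
      Projective P ∧ Module.Finite R P ∧ Function.Injective i ∧ Function.Surjective p ∧
      Function.Exact i p ∧ IsSyzygy R n K N

/-- projective dimension at most `n` -/
def pdLE (A : Type u) [Ring A] : ℕ → ModuleCat.{u} A → Prop
  | 0, M => Projective M
  | n+1, M => Projective M ∨ ∃ (K P : ModuleCat.{u} A) (i : K ⟶ P) (p : P ⟶ M),
      Projective P ∧ Function.Injective i ∧ Function.Surjective p ∧
      Function.Exact i p ∧ pdLE A n K

/-- global dimension at most `n` -/
def gldimLE (A : Type u) [Ring A] (n : ℕ) : Prop := ∀ M : ModuleCat.{u} A, pdLE A n M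

/-- `M` is `d`-torsionfree: it is a `d`-th syzygy of a finitely generated module `N`
with `Ext^i(N,R) = 0` for `1 ≤ i ≤ d`. -/
def IsTorsionFree (R : Type u) [CommRing R] (d : ℕ) (M : ModuleCat.{u} R) : Prop :=
  ∃ N : ModuleCat.{u} R, Module.Finite R N ∧
    (∀ i, 1 ≤ i → i ≤ d → extZero R i N (ModuleCat.of R R)) ∧ IsSyzygy R d M N

/-- `N` lies in `add M`: it is a direct summand of a finite direct sum of copies of `M`. -/
def MemAdd (R : Type u) [CommRing R] (M N : ModuleCat.{u} R) : Prop :=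
  ∃ (k : ℕ) (i : N →ₗ[R] (Fin k → M)) (p : (Fin k → M) →ₗ[R] N), p.comp i = LinearMap.id

/-- The two-sided ideal of `End_R(W)` consisting of endomorphisms factoring through a
projective module. -/
def stableEndIdeal (R W : Type u) [CommRing R] [AddCommGroup W] [Module R W] :
    TwoSidedIdeal (Module.End R W) :=
  TwoSidedIdeal.mk' {f : Module.End R W | FactorsThroughProjective (f : W →ₗ[R] W)}
    ⟨R, inferInstance, inferInstance, inferInstance, 0, 0, by ext x; simp⟩
    (by
      rintro f₁ f₂ ⟨P₁, _, _, hP₁, g₁, h₁, rfl⟩ ⟨P₂, _, _, hP₂, g₂, h₂, rfl⟩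
      haveI := hP₁; haveI := hP₂
      exact ⟨P₁ × P₂, inferInstance, inferInstance, inferInstance,
        g₁.prod g₂, h₁.comp (LinearMap.fst R P₁ P₂) + h₂.comp (LinearMap.snd R P₁ P₂),
        by ext x; simp⟩)
    (by
      rintro f ⟨P, _, _, hP, g, h, rfl⟩
      exact ⟨P, inferInstance, inferInstance, hP, g, -h, by ext x; simp⟩)
    (by
      rintro x y ⟨P, _, _, hP, g, h, rfl⟩
      exact ⟨P, inferInstance, inferInstance, hP, g, x ∘ₗ h, by ext z; simp⟩)
    (by
      rintro x y ⟨P, _, _, hP, g, h, rfl⟩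
      exact ⟨P, inferInstance, inferInstance, hP, g ∘ₗ y, h, by ext z; simp⟩)

/-!
Since `Hom(X, R) = 0`, no nonzero map out of `X` factors through a projective module, so the
stable endomorphism ring of `Ω⁰X ≅ X` is `End X`.

For the inductive step, let `0 → W → P → K → 0` be exact with `P` finitely generated projective
and `Ext¹(K, R) = 0`. Then every map `W → R` extends to `P`, hence (as `W` is finitely presented
and maps from it to a projective module factor through a finite free module) so does every map
from `W` to a projective module. Consequently every endomorphism of `W` extends to one of `P`,
which descends to `K`, and every endomorphism of `K` lifts to `P` and restricts to `W`. The pairs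
`(f, g) ∈ End W × End K` induced by a common endomorphism of `P` form a subring projecting onto
both factors, and in it `f` factors through a projective if and only if `g` does. So the two
stable endomorphism rings are isomorphic.

The vanishing of `Ext¹(K, R)` along the syzygy chain comes from `Ext^{≤ c}(X, R) = 0` by
dimension shifting, using the projective resolution `⋯ → Q₁ → Q₀ → P` of `K` obtained from one
of `W`.
-/

namespace CategoryTheory.ProjectiveResolution

variable {R : Type u} [CommRing R] {W P K : ModuleCat.{u} R} {i : W ⟶ P} {p : P ⟶ K}

def splice (Q : ProjectiveResolution W) (hi : Function.Injective i) (hp : Function.Surjective p)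
    (hex : Function.Exact i p) [Projective P] : ProjectiveResolution K where
  complex := Q.complex.augment (Q.π.f 0 ≫ i)
    ((Q.complex_d_comp_π_f_zero_assoc i).trans Limits.zero_comp)
  projective
    | 0 => inferInstanceAs (Projective P)
    | n + 1 => Q.projective n
  π := (ChainComplex.toSingle₀Equiv _ _).symm ⟨p, by ext; exact hex.apply_apply_eq_zero _⟩
  quasiIso := ⟨fun n => by
    cases n with
    | zero =>
      rw [ChainComplex.quasiIsoAt₀_iff, ShortComplex.quasiIso_iff_of_zeros' _ rfl rfl rfl]
      refine ⟨?_, (ModuleCat.epi_iff_surjective _).2 hp⟩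
      rw [ShortComplex.moduleCat_exact_iff]
      intro x hx
      obtain ⟨w, rfl⟩ := (hex x).1 hx
      obtain ⟨q, rfl⟩ := (ModuleCat.epi_iff_surjective (Q.π.f 0)).1 inferInstance w
      exact ⟨q, rfl⟩
    | succ n =>
      rw [quasiIsoAt_iff_exactAt' _ _ (ChainComplex.exactAt_succ_single_obj _ _)]
      cases n with
      | zero =>
        rw [HomologicalComplex.exactAt_iff' _ 2 1 0 (by simp) (by simp),
          ShortComplex.moduleCat_exact_iff]
        intro x hx
        exact (ShortComplex.moduleCat_exact_iff _).1 Q.exact₀ x (hi (hx.trans (map_zero _).symm))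
      | succ n =>
        rw [HomologicalComplex.exactAt_iff' _ (n + 3) (n + 2) (n + 1) (by simp) (by simp)]
        exact Q.exact_succ n⟩

end CategoryTheory.ProjectiveResolution

section Ext

variable {R : Type u} [CommRing R] {Z Y : ModuleCat.{u} R}

lemma extZero_iff_exactAt (Q : ProjectiveResolution Z) (n : ℕ) :
    extZero R n Z Y ↔ (Q.complex.linearYonedaObj R Y).ExactAt n := by
  rw [HomologicalComplex.exactAt_iff_isZero_homology, ← (Q.isoExt n Y).isZero_iff,
    ModuleCat.isZero_iff_subsingleton]
  rfl

lemma extZero_succ_iff (Q : ProjectiveResolution Z) (n : ℕ) :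
    extZero R (n + 1) Z Y ↔ ∀ x : Q.complex.X (n + 1) ⟶ Y, Q.complex.d (n + 2) (n + 1) ≫ x = 0 →
      ∃ y : Q.complex.X n ⟶ Y, Q.complex.d (n + 1) n ≫ y = x := by
  rw [extZero_iff_exactAt Q,
    HomologicalComplex.exactAt_iff' _ n (n + 1) (n + 2) (by simp) (by simp),
    ShortComplex.moduleCat_exact_iff]
  rfl

lemma hom_eq_zero_of_extZero_zero (h : extZero R 0 Z Y) (f : Z ⟶ Y) : f = 0 := by
  let Q := ProjectiveResolution.of Z
  rw [extZero_iff_exactAt Q, HomologicalComplex.exactAt_iff' _ 0 0 1 (by simp) (by simp)] at h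
  have hmono := h.mono_g ((Q.complex.linearYonedaObj R Y).shape 0 0 (by simp))
  have hπ : Q.π.f 0 ≫ f = 0 := (ModuleCat.mono_iff_injective _).1 hmono
    (((Q.complex_d_comp_π_f_zero_assoc f).trans Limits.zero_comp).trans (map_zero _).symm)
  ext z
  obtain ⟨q, rfl⟩ := (ModuleCat.epi_iff_surjective (Q.π.f 0)).1 inferInstance z
  exact congr($hπ q)

lemma extZero_of_iso {X X' : ModuleCat.{u} R} (e : X ≅ X') {n : ℕ} (h : extZero R n X Y) :
    extZero R n X' Y :=
  @Equiv.subsingleton _ _ (((Ext R (ModuleCat.{u} R) n).mapIso e.op).app Y).toLinearEquiv.toEquiv h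

variable {W P K : ModuleCat.{u} R} {i : W ⟶ P} {p : P ⟶ K}

lemma extZero_succ_succ_iff_of_exact (hi : Function.Injective i) (hp : Function.Surjective p)
    (hex : Function.Exact i p) [Projective P] (Y : ModuleCat.{u} R) (n : ℕ) :
    extZero R (n + 2) K Y ↔ extZero R (n + 1) W Y := by
  let Q := ProjectiveResolution.of W
  exact (extZero_succ_iff (Q.splice hi hp hex) (n + 1)).trans (extZero_succ_iff Q n).symm

lemma exists_comp_eq_of_extZero_one (hi : Function.Injective i) (hp : Function.Surjective p)
    (hex : Function.Exact i p) [Projective P] (h : extZero R 1 K Y) (f : W ⟶ Y) :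
    ∃ g : P ⟶ Y, i ≫ g = f := by
  let Q := ProjectiveResolution.of W
  obtain ⟨g, hg⟩ := (extZero_succ_iff (Q.splice hi hp hex) 0).1 h (Q.π.f 0 ≫ f)
    ((Q.complex_d_comp_π_f_zero_assoc f).trans Limits.zero_comp)
  refine ⟨g, ?_⟩
  ext w
  obtain ⟨q, rfl⟩ := (ModuleCat.epi_iff_surjective (Q.π.f 0)).1 inferInstance w
  exact congr($hg q)

lemma extZero_of_isSyzygy {j : ℕ} :
    ∀ {K N : ModuleCat.{u} R} {m : ℕ}, IsSyzygy R j K N → extZero R (j + m + 1) N Y →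
      extZero R (m + 1) K Y := by
  induction j with
  | zero =>
    rintro K N m ⟨e⟩ h
    exact extZero_of_iso e.symm (by rwa [zero_add] at h)
  | succ j ih =>
    rintro K N m ⟨P, K', i, p, hP, -, hi, hp, hex, hK'⟩ h
    exact (extZero_succ_succ_iff_of_exact hi hp hex Y m).1
      (ih hK' (by rwa [show j + (m + 1) + 1 = j + 1 + m + 1 by omega]))

end Ext

namespace TwoSidedIdeal

variable {A B : Type*} [Ring A] [Ring B]

def quotientEquivOfEqBot {I : TwoSidedIdeal A} (h : I = ⊥) : I.ringCon.Quotient ≃+* A :=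
  (RingCon.congr (RingEquiv.refl A) (by ext; simp [h, rel_iff, RingCon.ker_apply, sub_eq_zero])).trans
    (RingCon.quotientKerEquivOfSurjective (RingHom.id A) Function.surjective_id)

def quotientEquivOfSubringProd (I : TwoSidedIdeal A) (J : TwoSidedIdeal B) (S : Subring (A × B))
    (hfst : ∀ a, ∃ b, (a, b) ∈ S) (hsnd : ∀ b, ∃ a, (a, b) ∈ S)
    (hmem : ∀ x ∈ S, x.1 ∈ I ↔ x.2 ∈ J) : I.ringCon.Quotient ≃+* J.ringCon.Quotient :=
  (I.ringCon.comapQuotientEquivOfSurj ((RingHom.fst A B).comp S.subtype)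
      (fun a => (hfst a).elim fun b h => ⟨⟨(a, b), h⟩, rfl⟩) rfl).symm.trans
    (J.ringCon.comapQuotientEquivOfSurj ((RingHom.snd A B).comp S.subtype)
      (fun b => (hsnd b).elim fun a h => ⟨⟨(a, b), h⟩, rfl⟩) (by
        ext x y
        simpa [rel_iff] using hmem _ (_root_.sub_mem x.2 y.2)))

end TwoSidedIdeal

section LinearAlgebra

variable {R : Type*} {W P K N : Type*} [AddCommGroup W] [AddCommGroup P] [AddCommGroup K]
  [AddCommGroup N]

lemma Function.Exact.exists_comp_eq_of_injective [Ring R] [Module R W] [Module R P] [Module R K]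
    [Module R N] {ι : W →ₗ[R] P} {π : P →ₗ[R] K} (hex : Function.Exact ι π)
    (hι : Function.Injective ι) (D : N →ₗ[R] P) (hD : π ∘ₗ D = 0) :
    ∃ u : N →ₗ[R] W, ι ∘ₗ u = D :=
  ⟨(LinearEquiv.ofInjective ι hι).symm ∘ₗ
      D.codRestrict (LinearMap.range ι) (fun x => (hex _).1 congr($hD x)), by ext; simp; rfl⟩

lemma exists_comp_eq_of_projective [CommRing R] [Module R W] [Module R P] [Module R N]
    (ι : W →ₗ[R] P) [Module.FinitePresentation R W]
    (hext : ∀ f : W →ₗ[R] R, ∃ g : P →ₗ[R] R, g ∘ₗ ι = f) [Module.Projective R N]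
    (f : W →ₗ[R] N) : ∃ g : P →ₗ[R] N, g ∘ₗ ι = f := by
  obtain ⟨k, f₁, f₂, rfl⟩ := Module.Flat.exists_factorization_of_finitePresentation f
  choose g hg using fun j => hext (Finsupp.lapply j ∘ₗ f₁)
  let e := Finsupp.linearEquivFunOnFinite R R (Fin k)
  refine ⟨f₂ ∘ₗ e.symm.toLinearMap ∘ₗ LinearMap.pi g, ?_⟩
  ext w
  have hw : LinearMap.pi g (ι w) = e (f₁ w) := funext fun j => congr($(hg j) w)
  simp [hw]

end LinearAlgebra

lemma FactorsThroughProjective.eq_zero {R M N : Type u} [Ring R] [AddCommGroup M] [Module R M]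
    [AddCommGroup N] [Module R N] {f : M →ₗ[R] N} (hf : FactorsThroughProjective f)
    (h : ∀ g : M →ₗ[R] R, g = 0) : f = 0 := by
  obtain ⟨V, _, _, hV, g, k, rfl⟩ := hf
  obtain ⟨s, hs⟩ := Module.projective_def'.1 hV
  have hsg : s ∘ₗ g = 0 := by
    ext m a
    exact congr($(h (Finsupp.lapply a ∘ₗ s ∘ₗ g)) m)
  rw [← LinearMap.id_comp g, ← hs, LinearMap.comp_assoc, hsg]
  simp

section StableEnd

variable {R : Type u} [CommRing R] {M W P K : Type u} [AddCommGroup M] [Module R M]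
  [AddCommGroup W] [Module R W] [AddCommGroup P] [Module R P] [AddCommGroup K] [Module R K]

lemma mem_stableEndIdeal {f : Module.End R M} :
    f ∈ stableEndIdeal R M ↔ FactorsThroughProjective f :=
  TwoSidedIdeal.mem_mk' ..

lemma stableEndIdeal_eq_bot (h : ∀ g : M →ₗ[R] R, g = 0) : stableEndIdeal R M = ⊥ :=
  TwoSidedIdeal.ext fun f => by
    rw [mem_stableEndIdeal, TwoSidedIdeal.mem_bot]
    exact ⟨fun hf => hf.eq_zero h, fun hf => hf ▸ mem_stableEndIdeal.1 (zero_mem _)⟩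

def compatibleEndPairs (ι : W →ₗ[R] P) (π : P →ₗ[R] K) :
    Subring (Module.End R W × Module.End R K) where
  carrier := {x | ∃ G : Module.End R P, G ∘ₗ ι = ι ∘ₗ x.1 ∧ π ∘ₗ G = x.2 ∘ₗ π}
  mul_mem' := by
    rintro ⟨f, g⟩ ⟨f', g'⟩ ⟨G, hG₁, hG₂⟩ ⟨G', hG'₁, hG'₂⟩
    refine ⟨G * G', ?_, ?_⟩
    · rw [Module.End.mul_eq_comp, LinearMap.comp_assoc, hG'₁, ← LinearMap.comp_assoc, hG₁]
      rfl
    · rw [Module.End.mul_eq_comp, ← LinearMap.comp_assoc, hG₂, LinearMap.comp_assoc, hG'₂]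
      rfl
  one_mem' := ⟨1, rfl, rfl⟩
  add_mem' := by
    rintro ⟨f, g⟩ ⟨f', g'⟩ ⟨G, hG₁, hG₂⟩ ⟨G', hG'₁, hG'₂⟩
    exact ⟨G + G', by simp [LinearMap.add_comp, LinearMap.comp_add, *]⟩
  zero_mem' := ⟨0, by simp⟩
  neg_mem' := by
    rintro ⟨f, g⟩ ⟨G, hG₁, hG₂⟩
    exact ⟨-G, by simp [LinearMap.neg_comp, LinearMap.comp_neg, *]⟩

open LinearMap

variable {ι : W →ₗ[R] P} {π : P →ₗ[R] K}

lemma exists_mem_compatibleEndPairs_of_fst (hex : Function.Exact ι π)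
    (hπ : Function.Surjective π) [Module.FinitePresentation R W] [Module.Projective R P]
    (hext : ∀ f : W →ₗ[R] R, ∃ g : P →ₗ[R] R, g ∘ₗ ι = f) (f : Module.End R W) :
    ∃ g, (f, g) ∈ compatibleEndPairs ι π := by
  obtain ⟨G, hG⟩ := exists_comp_eq_of_projective ι hext (ι ∘ₗ f)
  obtain ⟨g, hg⟩ := (exact_lcomp_of_exact_of_surjective K hex hπ (π ∘ₗ G)).1 (by
    rw [lcomp_apply', comp_assoc, hG, ← comp_assoc, hex.linearMap_comp_eq_zero, zero_comp])
  exact ⟨g, G, hG, hg.symm⟩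

lemma exists_mem_compatibleEndPairs_of_snd (hex : Function.Exact ι π)
    (hι : Function.Injective ι) (hπ : Function.Surjective π) [Module.Projective R P]
    (g : Module.End R K) : ∃ f, (f, g) ∈ compatibleEndPairs ι π := by
  obtain ⟨G, hG⟩ := Module.projective_lifting_property π (g ∘ₗ π) hπ
  obtain ⟨f, hf⟩ := hex.exists_comp_eq_of_injective hι (G ∘ₗ ι) (by
    rw [← comp_assoc, hG, comp_assoc, hex.linearMap_comp_eq_zero, comp_zero])
  exact ⟨f, G, hf.symm, hG⟩

lemma factorsThroughProjective_iff_of_mem_compatibleEndPairs (hex : Function.Exact ι π)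
    (hι : Function.Injective ι) (hπ : Function.Surjective π) [Module.FinitePresentation R W]
    [Module.Projective R P] (hext : ∀ f : W →ₗ[R] R, ∃ g : P →ₗ[R] R, g ∘ₗ ι = f)
    {x : Module.End R W × Module.End R K} (hx : x ∈ compatibleEndPairs ι π) :
    FactorsThroughProjective x.1 ↔ FactorsThroughProjective x.2 := by
  obtain ⟨G, hG₁, hG₂⟩ := hx
  have hπι := hex.linearMap_comp_eq_zero
  constructor
  · -- `G` agrees with `ι ∘ h ∘ k'` on `W`, so their difference factors through `π`.
    rintro ⟨V, _, _, hV, k, h, hf⟩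
    obtain ⟨k', hk'⟩ := exists_comp_eq_of_projective ι hext k
    obtain ⟨v, hv⟩ := (exact_lcomp_of_exact_of_surjective P hex hπ (G - ι ∘ₗ h ∘ₗ k')).1 (by
      rw [lcomp_apply', sub_comp, hG₁, comp_assoc, comp_assoc, hk', hf, sub_self])
    refine ⟨P, _, _, ‹_›, v, π, (cancel_right hπ).1 ?_⟩
    calc π ∘ₗ v ∘ₗ π = π ∘ₗ (G - ι ∘ₗ h ∘ₗ k') := by rw [← hv]; rfl
      _ = x.2 ∘ₗ π := by rw [comp_sub, hG₂, ← comp_assoc _ ι π, hπι, zero_comp, sub_zero]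
  · -- `G` and `h' ∘ k ∘ π` induce the same map on `K`, so their difference lands in `W`.
    rintro ⟨V, _, _, hV, k, h, hg⟩
    obtain ⟨h', hh'⟩ := Module.projective_lifting_property π h hπ
    obtain ⟨u, hu⟩ := hex.exists_comp_eq_of_injective hι (G - h' ∘ₗ k ∘ₗ π) (by
      rw [comp_sub, hG₂, ← comp_assoc, hh', ← hg, comp_assoc, sub_self])
    refine ⟨P, _, _, ‹_›, ι, u, (cancel_left hι).1 ?_⟩
    calc ι ∘ₗ u ∘ₗ ι = (G - h' ∘ₗ k ∘ₗ π) ∘ₗ ι := by rw [← comp_assoc, hu]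
      _ = ι ∘ₗ x.1 := by
        rw [sub_comp, hG₁, comp_assoc, comp_assoc, hπι, comp_zero, comp_zero, sub_zero]

def stableEndEquivOfExact (hex : Function.Exact ι π) (hι : Function.Injective ι)
    (hπ : Function.Surjective π) [Module.FinitePresentation R W] [Module.Projective R P]
    (hext : ∀ f : W →ₗ[R] R, ∃ g : P →ₗ[R] R, g ∘ₗ ι = f) :
    (stableEndIdeal R W).ringCon.Quotient ≃+* (stableEndIdeal R K).ringCon.Quotient :=
  TwoSidedIdeal.quotientEquivOfSubringProd _ _ (compatibleEndPairs ι π)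
    (exists_mem_compatibleEndPairs_of_fst hex hπ hext)
    (exists_mem_compatibleEndPairs_of_snd hex hι hπ)
    (fun _ hx => by
      simpa only [mem_stableEndIdeal] using
        factorsThroughProjective_iff_of_mem_compatibleEndPairs hex hι hπ hext hx)

end StableEnd

theorem stmt19_general (R : Type u) [CommRing R] [IsNoetherianRing R]
    (X : ModuleCat.{u} R)
    (c : ℕ) (hgrade : ∀ i ≤ c, extZero R i X (ModuleCat.of R R))
    (W : ModuleCat.{u} R) (hW : IsSyzygy R c W X) :
    Nonempty ((stableEndIdeal R W).ringCon.Quotient ≃+* Module.End R X) := by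
  induction c generalizing W with
  | zero =>
    obtain ⟨e⟩ := hW
    have hdual (g : W →ₗ[R] R) : g = 0 := congrArg ModuleCat.Hom.hom
      (hom_eq_zero_of_extZero_zero (extZero_of_iso e.symm (hgrade 0 le_rfl)) (ModuleCat.ofHom g))
    exact ⟨(TwoSidedIdeal.quotientEquivOfEqBot (stableEndIdeal_eq_bot hdual)).trans
      e.toLinearEquiv.conjRingEquiv⟩
  | succ c ih =>
    obtain ⟨P, K, i, p, _, _, hi, hp, hex, hK⟩ := hW
    have : Module.Finite R W := Module.Finite.of_injective i.hom hi
    have := Module.finitePresentation_of_finite R W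
    have hext (f : W →ₗ[R] R) : ∃ g : P →ₗ[R] R, g ∘ₗ i.hom = f := by
      obtain ⟨g, hg⟩ := exists_comp_eq_of_extZero_one hi hp hex
        (extZero_of_isSyzygy (m := 0) hK (hgrade (c + 1) le_rfl)) (ModuleCat.ofHom f)
      exact ⟨g.hom, congrArg ModuleCat.Hom.hom hg⟩
    obtain ⟨e⟩ := ih (fun j hj => hgrade j (Nat.le_succ_of_le hj)) K hK
    exact ⟨(stableEndEquivOfExact hex hi hp hext).trans e⟩

/-- For `0 ≤ c < grade X`, the stable endomorphism ring of `Ω^c X` is isomorphic to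
`End_R(X)`. -/
theorem stmt19 (R : Type u) [CommRing R] [IsNoetherianRing R]
    (X : ModuleCat.{u} R) [Module.Finite R X]
    (c : ℕ) (hgrade : ∀ i ≤ c, extZero R i X (ModuleCat.of R R))
    (W : ModuleCat.{u} R) (hW : IsSyzygy R c W X) :
    Nonempty ((stableEndIdeal R W).ringCon.Quotient ≃+* Module.End R X) :=
  stmt19_general R X c hgrade W hW
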